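/- arXiv:2401.04983 — 4 statements merged into one kernel-verified Lean document; each statement's English description precedes it below -/
import Mathlib

section
/- For the unit Euclidean disc D = {x ∈ ℝ² : |x| < 1} and points x, y ∈ D with x ≠ y, let m be the intersection of the ray from x through y with the boundary ∂D. Then the Funk distance d_F(x,y) = log(|x−m|/|y−m|) satisfies the triangle inequality: d_F(x,z) ≤ d_F(x,y) + d_F(y,z) for all x, y, z ∈ D. -/
/-!
For a functional `g` with `‖g‖ ≤ 1` and a point `m` of the unit sphere on the ray from `x`
through `y`, the ratio `(1 - g x) / (1 - g y)` of the distances of `x` and `y` to the hyperplane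
`g = 1` is at most the Funk ratio `‖x - m‖ / ‖y - m‖`, with equality when `g` supports the ball
at `m`. Choosing (Hahn–Banach) `g` supporting the ball at the endpoint `m₃` of the ray from `x`
through `z`, the Funk ratio of `(x, z)` becomes the telescoping product of the `g`-ratios of
`(x, y)` and `(y, z)`, each bounded by the corresponding Funk ratio.
-/

section

variable {E : Type*} [SeminormedAddCommGroup E] {x y m : E}

lemma norm_sub_div_norm_sub_pos (hx : ‖x‖ < 1) (hy : ‖y‖ < 1) (hm : ‖m‖ = 1) :
    0 < ‖x - m‖ / ‖y - m‖ := by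
  have hxm := norm_sub_norm_le m x
  have hym := norm_sub_norm_le m y
  rw [norm_sub_rev] at hxm hym
  exact div_pos (by linarith) (by linarith)

end

section

variable {E : Type*} [NormedAddCommGroup E] [NormedSpace ℝ E] {x y m : E} {t : ℝ}

lemma one_lt_of_norm_add_smul_sub_eq_one (hx : ‖x‖ < 1) (hy : ‖y‖ < 1) (ht : 0 < t)
    (hm : ‖x + t • (y - x)‖ = 1) : 1 < t := by
  by_contra! ht₁
  have := (convex_ball (0 : E) 1).add_smul_sub_mem (by simpa using hx) (by simpa using hy)
    ⟨ht.le, ht₁⟩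
  simp [hm] at this

lemma norm_sub_div_norm_sub_add_smul_sub (hxy : x ≠ y) (ht : 1 < t) :
    ‖x - (x + t • (y - x))‖ / ‖y - (x + t • (y - x))‖ = t / (t - 1) := by
  have hx : x - (x + t • (y - x)) = (-t) • (y - x) := by module
  have hy : y - (x + t • (y - x)) = (1 - t) • (y - x) := by module
  rw [hx, hy, norm_smul, norm_smul, Real.norm_eq_abs, Real.norm_eq_abs,
    abs_of_neg (by linarith), abs_of_neg (by linarith), neg_neg, neg_sub]
  exact mul_div_mul_right _ _ (norm_ne_zero_iff.2 (sub_ne_zero.2 hxy.symm))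

lemma StrongDual.apply_le_norm {g : StrongDual ℝ E} (hg : ‖g‖ ≤ 1) (v : E) : g v ≤ ‖v‖ :=
  (le_abs_self _).trans (by simpa using g.le_of_opNorm_le hg v)

lemma StrongDual.one_sub_apply_pos {g : StrongDual ℝ E} (hg : ‖g‖ ≤ 1) (hy : ‖y‖ < 1) :
    0 < 1 - g y := by
  linarith [StrongDual.apply_le_norm hg y]

lemma one_sub_div_one_sub_le_norm_sub_div_norm_sub (hx : ‖x‖ < 1) (hy : ‖y‖ < 1) (hxy : x ≠ y)
    (hm : ‖m‖ = 1) (hxym : ∃ t : ℝ, 0 < t ∧ m = x + t • (y - x))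
    {g : StrongDual ℝ E} (hg : ‖g‖ ≤ 1) :
    (1 - g x) / (1 - g y) ≤ ‖x - m‖ / ‖y - m‖ := by
  obtain ⟨t, ht, rfl⟩ := hxym
  have ht₁ := one_lt_of_norm_add_smul_sub_eq_one hx hy ht hm
  have hgm : g x + t * (g y - g x) ≤ 1 := by
    simpa [hm] using StrongDual.apply_le_norm hg (x + t • (y - x))
  have hgy := StrongDual.one_sub_apply_pos hg hy
  rw [norm_sub_div_norm_sub_add_smul_sub hxy ht₁, div_le_div_iff₀ hgy (by linarith)]
  linarith

lemma one_sub_div_one_sub_eq_norm_sub_div_norm_sub (hx : ‖x‖ < 1) (hy : ‖y‖ < 1) (hxy : x ≠ y)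
    (hm : ‖m‖ = 1) (hxym : ∃ t : ℝ, 0 < t ∧ m = x + t • (y - x))
    {g : StrongDual ℝ E} (hg : ‖g‖ ≤ 1) (hgm : g m = 1) :
    (1 - g x) / (1 - g y) = ‖x - m‖ / ‖y - m‖ := by
  obtain ⟨t, ht, rfl⟩ := hxym
  have ht₁ := one_lt_of_norm_add_smul_sub_eq_one hx hy ht hm
  replace hgm : g x + t * (g y - g x) = 1 := by simpa using hgm
  have hgy := StrongDual.one_sub_apply_pos hg hy
  rw [norm_sub_div_norm_sub_add_smul_sub hxy ht₁, div_eq_div_iff hgy.ne' (by linarith)]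
  linarith

theorem norm_sub_div_norm_sub_le_mul {z m₁ m₂ m₃ : E}
    (hx : ‖x‖ < 1) (hy : ‖y‖ < 1) (hz : ‖z‖ < 1)
    (hxy : x ≠ y) (hyz : y ≠ z) (hxz : x ≠ z)
    (hm₁ : ‖m₁‖ = 1) (ht₁ : ∃ t : ℝ, 0 < t ∧ m₁ = x + t • (y - x))
    (hm₂ : ‖m₂‖ = 1) (ht₂ : ∃ t : ℝ, 0 < t ∧ m₂ = y + t • (z - y))
    (hm₃ : ‖m₃‖ = 1) (ht₃ : ∃ t : ℝ, 0 < t ∧ m₃ = x + t • (z - x)) :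
    ‖x - m₃‖ / ‖z - m₃‖ ≤ ‖x - m₁‖ / ‖y - m₁‖ * (‖y - m₂‖ / ‖z - m₂‖) := by
  obtain ⟨g, hg, hgm₃⟩ := exists_dual_vector'' ℝ m₃
  rw [hm₃, RCLike.ofReal_one] at hgm₃
  calc ‖x - m₃‖ / ‖z - m₃‖ = (1 - g x) / (1 - g z) :=
        (one_sub_div_one_sub_eq_norm_sub_div_norm_sub hx hz hxz hm₃ ht₃ hg hgm₃).symm
    _ = (1 - g x) / (1 - g y) * ((1 - g y) / (1 - g z)) := by
        rw [div_mul_div_cancel₀ (StrongDual.one_sub_apply_pos hg hy).ne']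
    _ ≤ ‖x - m₁‖ / ‖y - m₁‖ * (‖y - m₂‖ / ‖z - m₂‖) :=
        mul_le_mul (one_sub_div_one_sub_le_norm_sub_div_norm_sub hx hy hxy hm₁ ht₁ hg)
          (one_sub_div_one_sub_le_norm_sub_div_norm_sub hy hz hyz hm₂ ht₂ hg)
          (div_nonneg (StrongDual.one_sub_apply_pos hg hy).le
            (StrongDual.one_sub_apply_pos hg hz).le) (norm_sub_div_norm_sub_pos hx hy hm₁).le

end

/-- Triangle inequality for the Funk distance on the Euclidean unit disc. -/
theorem funk_triangle_inequality
    (x y z m₁ m₂ m₃ : EuclideanSpace ℝ (Fin 2))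
    (hx : ‖x‖ < 1) (hy : ‖y‖ < 1) (hz : ‖z‖ < 1)
    (hxy : x ≠ y) (hyz : y ≠ z) (hxz : x ≠ z)
    (hm₁ : ‖m₁‖ = 1) (ht₁ : ∃ t : ℝ, 0 < t ∧ m₁ = x + t • (y - x))
    (hm₂ : ‖m₂‖ = 1) (ht₂ : ∃ t : ℝ, 0 < t ∧ m₂ = y + t • (z - y))
    (hm₃ : ‖m₃‖ = 1) (ht₃ : ∃ t : ℝ, 0 < t ∧ m₃ = x + t • (z - x)) :
    Real.log (‖x - m₃‖ / ‖z - m₃‖) ≤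
      Real.log (‖x - m₁‖ / ‖y - m₁‖) + Real.log (‖y - m₂‖ / ‖z - m₂‖) := by
  rw [← Real.log_mul (norm_sub_div_norm_sub_pos hx hy hm₁).ne'
    (norm_sub_div_norm_sub_pos hy hz hm₂).ne']
  exact Real.log_le_log (norm_sub_div_norm_sub_pos hx hz hm₃)
    (norm_sub_div_norm_sub_le_mul hx hy hz hxy hyz hxz hm₁ ht₁ hm₂ ht₂ hm₃ ht₃)
end

section
/- Let r ∈ (0,1) and define on D_E(r) the Riemannian metric a_{ij}(x) = (1/(r²−|x|²)²)·((r²−|x|²)δ_{ij} + x^i x^j) and the 1-form coefficients b_i(x) = (1−r²)x^i/((r²−|x|²)(1−|x|²)). Then the α-norm of β satisfies ||β||²_α = a^{ij} b_i b_j = |x|²(1−r²)²/(r²(1−|x|²)²), and this quantity is strictly less than 1 for all x ∈ D_E(r). Consequently F = α + β is a Randers metric on D_E(r). -/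
/-!
The matrix `a = (r² - |x|²)⁻² ((r² - |x|²) I + x xᵀ)` is positive definite, and since
`(r² - |x|²) + |x|² = r²` the position vector `x` is an eigenvector of `a` with eigenvalue
`r² / (r² - |x|²)²`. As `b` is a multiple of `x`, `a⁻¹ b = ((r² - |x|²)² / r²) b`, which gives
the formula for `a^{ij} b_i b_j`. It is `< 1` because
`r (1 - |x|²) - |x| (1 - r²) = (r - |x|) (1 + r |x|)`.
-/

open Matrix

namespace Matrix

variable {n K : Type*} [Fintype n] [Field K]

theorem inv_mulVec_eq_inv_smul_of_mulVec_eq_smul [DecidableEq n] {A : Matrix n n K}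
    (hA : IsUnit A) {v : n → K} {μ : K} (hμ : μ ≠ 0) (hv : A *ᵥ v = μ • v) :
    A⁻¹ *ᵥ v = μ⁻¹ • v := by
  have := hA.invertible
  exact inv_mulVec_eq_vec <| by rw [mulVec_smul, hv, inv_smul_smul₀ hμ]

theorem sum_sum_mul_mul_eq_dotProduct_mulVec (A : Matrix n n K) (v : n → K) :
    ∑ i, ∑ j, A i j * v i * v j = v ⬝ᵥ A *ᵥ v := by
  simp only [dotProduct, mulVec, Finset.mul_sum]
  exact Finset.sum_congr rfl fun i _ => Finset.sum_congr rfl fun j _ => by ring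

end Matrix

theorem EuclideanSpace.real_dotProduct_self {n : Type*} [Fintype n] (x : EuclideanSpace ℝ n) :
    x.ofLp ⬝ᵥ x.ofLp = ‖x‖ ^ 2 := by
  rw [EuclideanSpace.real_norm_sq_eq]
  simp only [dotProduct, sq]

section Funk

variable {n : Type*} [Fintype n] [DecidableEq n] (r : ℝ) (x : EuclideanSpace ℝ n)

/-- The matrix `(a_ij)` of the Riemannian part `α` of the Funk metric of the disc `|x| < r`. -/
noncomputable def funkMatrix : Matrix n n ℝ :=
  Matrix.of fun i j =>
    (1 / (r ^ 2 - ‖x‖ ^ 2) ^ 2) * ((r ^ 2 - ‖x‖ ^ 2) * (if i = j then 1 else 0) + x i * x j)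

theorem funkMatrix_eq_smul :
    funkMatrix r x = (1 / (r ^ 2 - ‖x‖ ^ 2) ^ 2) •
      ((r ^ 2 - ‖x‖ ^ 2) • 1 + vecMulVec x.ofLp x.ofLp) := by
  ext i j
  simp [funkMatrix, one_apply, vecMulVec_apply]

variable {r x}

theorem posDef_funkMatrix (hx : ‖x‖ < r) : (funkMatrix r x).PosDef := by
  have hd : 0 < r ^ 2 - ‖x‖ ^ 2 := by nlinarith [norm_nonneg x]
  rw [funkMatrix_eq_smul]
  refine PosDef.smul ?_ (by positivity)
  refine (PosDef.one.smul hd).add_posSemidef ?_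
  simpa using posSemidef_vecMulVec_self_star x.ofLp

variable (r x)

theorem funkMatrix_mulVec_self :
    funkMatrix r x *ᵥ x.ofLp = (r ^ 2 / (r ^ 2 - ‖x‖ ^ 2) ^ 2) • x.ofLp := by
  rw [funkMatrix_eq_smul, smul_mulVec, add_mulVec, smul_mulVec, one_mulVec, vecMulVec_mulVec,
    EuclideanSpace.real_dotProduct_self, op_smul_eq_smul, ← add_smul, smul_smul]
  congr 1
  ring

variable {r x}

theorem funkMatrix_inv_mulVec_self (hr : 0 < r) (hx : ‖x‖ < r) :
    (funkMatrix r x)⁻¹ *ᵥ x.ofLp = ((r ^ 2 - ‖x‖ ^ 2) ^ 2 / r ^ 2) • x.ofLp := by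
  have hd : 0 < r ^ 2 - ‖x‖ ^ 2 := by nlinarith [norm_nonneg x]
  rw [inv_mulVec_eq_inv_smul_of_mulVec_eq_smul (posDef_funkMatrix hx).isUnit (by positivity)
    (funkMatrix_mulVec_self r x), inv_div]

end Funk

theorem funk_beta_normSq_lt_one {s r : ℝ} (hs : 0 ≤ s) (hsr : s < r) (hr : r < 1) :
    s ^ 2 * (1 - r ^ 2) ^ 2 / (r ^ 2 * (1 - s ^ 2) ^ 2) < 1 := by
  have hr0 : 0 < r := hs.trans_lt hsr
  have hs1 : s < 1 := hsr.trans hr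
  have key : s * (1 - r ^ 2) < r * (1 - s ^ 2) := by nlinarith [mul_nonneg hs hr0.le]
  have hs2 : 0 < 1 - s ^ 2 := by nlinarith
  rw [div_lt_one (by positivity), ← mul_pow, ← mul_pow]
  exact pow_lt_pow_left₀ key (mul_nonneg hs (by nlinarith)) two_ne_zero

/-- The `α`-norm of the 1-form `β` of the Funk-Finsler metric is `< 1`, so `F = α + β`
is a Randers metric. -/
theorem funk_beta_norm_lt_one (r : ℝ) (hr0 : 0 < r) (hr1 : r < 1)
    (x : EuclideanSpace ℝ (Fin 2)) (hx : ‖x‖ < r)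
    (a : Matrix (Fin 2) (Fin 2) ℝ)
    (ha : a = Matrix.of fun i j =>
      (1 / (r ^ 2 - ‖x‖ ^ 2) ^ 2) *
        ((r ^ 2 - ‖x‖ ^ 2) * (if i = j then 1 else 0) + x i * x j))
    (b : Fin 2 → ℝ)
    (hb : b = fun i => (1 - r ^ 2) * x i / ((r ^ 2 - ‖x‖ ^ 2) * (1 - ‖x‖ ^ 2))) :
    (∑ i, ∑ j, a⁻¹ i j * b i * b j =
        ‖x‖ ^ 2 * (1 - r ^ 2) ^ 2 / (r ^ 2 * (1 - ‖x‖ ^ 2) ^ 2)) ∧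
      ‖x‖ ^ 2 * (1 - r ^ 2) ^ 2 / (r ^ 2 * (1 - ‖x‖ ^ 2) ^ 2) < 1 := by
  obtain rfl : a = funkMatrix r x := ha
  have hb_smul : b = ((1 - r ^ 2) / ((r ^ 2 - ‖x‖ ^ 2) * (1 - ‖x‖ ^ 2))) • x.ofLp := by
    ext i
    rw [hb, Pi.smul_apply, smul_eq_mul, ← mul_div_right_comm]
  have hd : r ^ 2 - ‖x‖ ^ 2 ≠ 0 := by nlinarith [norm_nonneg x]
  have h1 : 1 - ‖x‖ ^ 2 ≠ 0 := by nlinarith [norm_nonneg x]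
  refine ⟨?_, funk_beta_normSq_lt_one (norm_nonneg x) hx hr1⟩
  rw [sum_sum_mul_mul_eq_dotProduct_mulVec, hb_smul, mulVec_smul,
    funkMatrix_inv_mulVec_self hr0 hx, smul_dotProduct, dotProduct_smul, dotProduct_smul,
    EuclideanSpace.real_dotProduct_self]
  simp only [smul_eq_mul]
  field_simp
end

section
/- Let r ∈ (0,1), b_i(x) = (1−r²)x^i/((r²−|x|²)(1−|x|²)) on D_E(r), and let Γ^k_{ij}(x) = (x^iδ_{kj} + x^jδ_{ki})/(r²−|x|²). Then the covariant derivative b_{i|j} := ∂b_i/∂x^j − b_k Γ^k_{ij} equals ((1−r²)/((r²−|x|²)(1−|x|²)))·(δ_{ij} + 2x^ix^j/(1−|x|²)); in particular b_{i|j} = b_{j|i} for all i, j. -/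
/-!
Write `b_i(x) = x^i φ(|x|²)` with `φ(s) = (1 - r²) / ((r² - s)(1 - s))`. By the product rule
`∂_j b_i = δ_ij φ + 2 x^i x^j φ'`, and the contraction with `Γ` equals `2 x^i x^j φ / (r² - |x|²)`.
Since `φ' = φ ((r² - s)⁻¹ + (1 - s)⁻¹)`, the Christoffel term cancels the first part of the
logarithmic derivative and leaves `φ (δ_ij + 2 x^i x^j / (1 - |x|²))`, which is symmetric in `i, j`.
-/

open Finset

theorem sum_mul_sym_delta_div {ι : Type*} [Fintype ι] [DecidableEq ι] (b x : ι → ℝ) (s : ℝ)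
    (i j : ι) :
    ∑ k, b k * ((x i * (if k = j then 1 else 0) + x j * (if k = i then 1 else 0)) / s) =
      (b j * x i + b i * x j) / s := by
  simp only [← mul_div_assoc, ← sum_div, mul_add, mul_ite, mul_one, mul_zero, sum_add_distrib,
    sum_ite_eq', mem_univ, if_true]

theorem fderiv_coord_mul_comp_norm_sq_single {ι : Type*} [Fintype ι] [DecidableEq ι]
    {φ : ℝ → ℝ} {φ' : ℝ} {x : EuclideanSpace ℝ ι} (hφ : HasDerivAt φ φ' (‖x‖ ^ 2)) (i j : ι) :
    fderiv ℝ (fun y : EuclideanSpace ℝ ι => y i * φ (‖y‖ ^ 2)) x (EuclideanSpace.single j 1) =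
      (if i = j then φ (‖x‖ ^ 2) else 0) + 2 * φ' * x i * x j := by
  have h : HasFDerivAt (fun y : EuclideanSpace ℝ ι => y i * φ (‖y‖ ^ 2)) _ x :=
    (EuclideanSpace.proj i).hasFDerivAt.mul
      (hφ.comp_hasFDerivAt x (hasStrictFDerivAt_norm_sq x).hasFDerivAt)
  rw [h.fderiv]
  simp only [PiLp.proj_apply, Function.comp_apply, add_apply, smul_apply, coe_innerSL_apply,
    EuclideanSpace.inner_single_right, Real.ringHom_apply, one_mul, nsmul_eq_mul, Nat.cast_ofNat,
    smul_eq_mul, PiLp.single_apply, mul_ite, mul_one, mul_zero]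
  ring

noncomputable def funkWeight (r s : ℝ) : ℝ := (1 - r ^ 2) / ((r ^ 2 - s) * (1 - s))

theorem hasDerivAt_funkWeight {r s : ℝ} (hr : r ^ 2 - s ≠ 0) (h1 : 1 - s ≠ 0) :
    HasDerivAt (funkWeight r) (funkWeight r s * ((r ^ 2 - s)⁻¹ + (1 - s)⁻¹)) s := by
  have h : HasDerivAt (fun t => (1 - r ^ 2) / ((r ^ 2 - t) * (1 - t))) _ s :=
    (hasDerivAt_const s (1 - r ^ 2)).fun_div
      (((hasDerivAt_id' s).const_sub (r ^ 2)).fun_mul ((hasDerivAt_id' s).const_sub 1))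
      (mul_ne_zero hr h1)
  refine h.congr_deriv ?_
  rw [funkWeight]
  field_simp
  ring

theorem funk_covariant_derivative_general (r : ℝ) (hr1 : r < 1)
    (b : Fin 2 → EuclideanSpace ℝ (Fin 2) → ℝ)
    (hb : ∀ i x, b i x = (1 - r ^ 2) * x i / ((r ^ 2 - ‖x‖ ^ 2) * (1 - ‖x‖ ^ 2)))
    (Γ : Fin 2 → Fin 2 → Fin 2 → EuclideanSpace ℝ (Fin 2) → ℝ)
    (hΓ : ∀ k i j x, Γ k i j x =
      (x i * (if k = j then 1 else 0) + x j * (if k = i then 1 else 0)) /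
        (r ^ 2 - ‖x‖ ^ 2))
    (x : EuclideanSpace ℝ (Fin 2)) (hx : ‖x‖ < r) :
    (∀ i j, fderiv ℝ (b i) x (EuclideanSpace.single j 1) - ∑ k, b k x * Γ k i j x =
        ((1 - r ^ 2) / ((r ^ 2 - ‖x‖ ^ 2) * (1 - ‖x‖ ^ 2))) *
          ((if i = j then 1 else 0) + 2 * x i * x j / (1 - ‖x‖ ^ 2))) ∧
      ∀ i j, fderiv ℝ (b i) x (EuclideanSpace.single j 1) - ∑ k, b k x * Γ k i j x =
        fderiv ℝ (b j) x (EuclideanSpace.single i 1) - ∑ k, b k x * Γ k j i x := by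
  have hxr : r ^ 2 - ‖x‖ ^ 2 ≠ 0 :=
    (sub_pos.2 (pow_lt_pow_left₀ hx (norm_nonneg x) two_ne_zero)).ne'
  have hx1 : 1 - ‖x‖ ^ 2 ≠ 0 :=
    (sub_pos.2 (pow_lt_one₀ (norm_nonneg x) (hx.trans hr1) two_ne_zero)).ne'
  have hb_radial : ∀ i, b i = fun y => y i * funkWeight r (‖y‖ ^ 2) := fun i ↦ by
    ext y
    rw [hb, funkWeight]
    ring
  have formula : ∀ i j, fderiv ℝ (b i) x (EuclideanSpace.single j 1) - ∑ k, b k x * Γ k i j x =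
      ((1 - r ^ 2) / ((r ^ 2 - ‖x‖ ^ 2) * (1 - ‖x‖ ^ 2))) *
        ((if i = j then 1 else 0) + 2 * x i * x j / (1 - ‖x‖ ^ 2)) := fun i j ↦ by
    simp only [hΓ, sum_mul_sym_delta_div (b · x)]
    rw [hb_radial i, hb_radial j,
      fderiv_coord_mul_comp_norm_sq_single (hasDerivAt_funkWeight hxr hx1)]
    unfold funkWeight
    split_ifs <;> field_simp <;> ring
  refine ⟨formula, fun i j ↦ ?_⟩
  rw [formula, formula]
  simp only [eq_comm (a := i), mul_right_comm _ (x i) (x j)]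

/-- Covariant derivative of the 1-form coefficients `b_i` of the Funk-Finsler metric with
respect to the Klein metric, and its symmetry. -/
theorem funk_covariant_derivative (r : ℝ) (hr0 : 0 < r) (hr1 : r < 1)
    (b : Fin 2 → EuclideanSpace ℝ (Fin 2) → ℝ)
    (hb : ∀ i x, b i x = (1 - r ^ 2) * x i / ((r ^ 2 - ‖x‖ ^ 2) * (1 - ‖x‖ ^ 2)))
    (Γ : Fin 2 → Fin 2 → Fin 2 → EuclideanSpace ℝ (Fin 2) → ℝ)
    (hΓ : ∀ k i j x, Γ k i j x =
      (x i * (if k = j then 1 else 0) + x j * (if k = i then 1 else 0)) /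
        (r ^ 2 - ‖x‖ ^ 2))
    (x : EuclideanSpace ℝ (Fin 2)) (hx : ‖x‖ < r) :
    (∀ i j, fderiv ℝ (b i) x (EuclideanSpace.single j 1) - ∑ k, b k x * Γ k i j x =
        ((1 - r ^ 2) / ((r ^ 2 - ‖x‖ ^ 2) * (1 - ‖x‖ ^ 2))) *
          ((if i = j then 1 else 0) + 2 * x i * x j / (1 - ‖x‖ ^ 2))) ∧
      ∀ i j, fderiv ℝ (b i) x (EuclideanSpace.single j 1) - ∑ k, b k x * Γ k i j x =
        fderiv ℝ (b j) x (EuclideanSpace.single i 1) - ∑ k, b k x * Γ k j i x :=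
  funk_covariant_derivative_general r hr1 b hb Γ hΓ x hx
end

section
/- Let r ∈ (0,1), and let F be the Funk-Finsler metric on D_E(r), F(x,ξ) = α(x,ξ) + β(x,ξ) with α(x,ξ) = √((r²−|x|²)|ξ|² + ⟨x,ξ⟩²)/(r²−|x|²) and β(x,ξ) = (1−r²)⟨x,ξ⟩/((r²−|x|²)(1−|x|²)). At x = 0, the flag curvature K(0,ξ) computed from the formula K = (3(φ/(2F))² − ψ/(2F) − α²)/F² with φ = b_{i|j}ξ^iξ^j and ψ = b_{i|j|k}ξ^iξ^jξ^k satisfies K(0,ξ) = −(1 − (3/4)(1−r²)²) for every ξ ≠ 0; in particular the flag curvature at the origin is a negative constant independent of direction (for r close to 1). -/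
open scoped RealInnerProductSpace

/-! `B` is even in `x`, so its derivative vanishes at the origin, and `Γ` vanishes there too; hence
`ψ = 0` at the origin. There `α = F = |ξ|/r` and `B = (1 - r²)/r² · δ`, so `φ = (1 - r²)|ξ|²/r²`
and the curvature formula collapses to the constant `(3/4)(1 - r²)² - 1`. -/

/-- Comparing `f` with `f ∘ (-·)` gives `L = -L` for `L = fderiv 𝕜 f 0`; no differentiability is
needed, since otherwise `fderiv` is the junk value `0`. -/
theorem fderiv_eq_zero_of_even {𝕜 E F : Type*} [NontriviallyNormedField 𝕜] [CharZero 𝕜]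
    [NormedAddCommGroup E] [NormedSpace 𝕜 E] [NormedAddCommGroup F] [NormedSpace 𝕜 F]
    {f : E → F} (hf : ∀ x, f (-x) = f x) : fderiv 𝕜 f 0 = 0 := by
  have h := fderiv_comp_smul (𝕜 := 𝕜) (f := f) (x := 0) (-1)
  simp only [neg_one_smul, hf, smul_zero] at h
  have h2 : (2 : 𝕜) • fderiv 𝕜 f 0 = 0 := by
    rw [two_smul]
    nth_rewrite 1 [h]
    exact neg_add_cancel _
  exact (smul_eq_zero.mp h2).resolve_left two_ne_zero

theorem EuclideanSpace.sum_sum_const_mul_ite_mul_mul {ι : Type*} [Fintype ι] [DecidableEq ι]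
    (c : ℝ) (ξ : EuclideanSpace ℝ ι) :
    ∑ i, ∑ j, c * (if i = j then 1 else 0) * ξ i * ξ j = c * ‖ξ‖ ^ 2 := by
  simp only [mul_ite, mul_one, mul_zero, ite_mul, zero_mul, Finset.sum_ite_eq, Finset.mem_univ,
    if_true, EuclideanSpace.real_norm_sq_eq, Finset.mul_sum]
  exact Finset.sum_congr rfl fun i _ => by ring

theorem funk_flag_curvature_at_origin_general (r : ℝ) (hr0 : 0 < r)
    (Γ : Fin 2 → Fin 2 → Fin 2 → EuclideanSpace ℝ (Fin 2) → ℝ)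
    (hΓ : ∀ k i j x, Γ k i j x =
      (x i * (if k = j then 1 else 0) + x j * (if k = i then 1 else 0)) /
        (r ^ 2 - ‖x‖ ^ 2))
    (B : Fin 2 → Fin 2 → EuclideanSpace ℝ (Fin 2) → ℝ)
    (hB : ∀ i j x, B i j x =
      ((1 - r ^ 2) / ((r ^ 2 - ‖x‖ ^ 2) * (1 - ‖x‖ ^ 2))) *
        ((if i = j then 1 else 0) + 2 * x i * x j / (1 - ‖x‖ ^ 2)))
    (B3 : Fin 2 → Fin 2 → Fin 2 → EuclideanSpace ℝ (Fin 2) → ℝ)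
    (hB3 : ∀ i j k x, B3 i j k x =
      fderiv ℝ (B i j) x (EuclideanSpace.single k 1) -
        (∑ m, B i m x * Γ m j k x) - ∑ m, B j m x * Γ m i k x)
    (ξ : EuclideanSpace ℝ (Fin 2)) (hξ : ξ ≠ 0) :
    let x0 : EuclideanSpace ℝ (Fin 2) := 0
    let α := Real.sqrt ((r ^ 2 - ‖x0‖ ^ 2) * ‖ξ‖ ^ 2 + ⟪x0, ξ⟫ ^ 2) / (r ^ 2 - ‖x0‖ ^ 2)
    let F := α + (1 - r ^ 2) * ⟪x0, ξ⟫ / ((r ^ 2 - ‖x0‖ ^ 2) * (1 - ‖x0‖ ^ 2))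
    let φ := ∑ i, ∑ j, B i j x0 * ξ i * ξ j
    let ψ := ∑ i, ∑ j, ∑ k, B3 i j k x0 * ξ i * ξ j * ξ k
    (3 * (φ / (2 * F)) ^ 2 - ψ / (2 * F) - α ^ 2) / F ^ 2 =
      -(1 - (3 / 4) * (1 - r ^ 2) ^ 2) := by
  intro x0 α F φ ψ
  have hB_even (i j : Fin 2) (x : EuclideanSpace ℝ (Fin 2)) : B i j (-x) = B i j x := by
    simp only [hB, norm_neg, PiLp.neg_apply, mul_neg, neg_mul, neg_neg]
  have hψ : ψ = 0 := by
    have hB3_zero (i j k : Fin 2) : B3 i j k x0 = 0 := by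
      simp [hB3, fderiv_eq_zero_of_even (hB_even i j), hΓ, x0]
    simp [ψ, hB3_zero]
  have hφ : φ = (1 - r ^ 2) / r ^ 2 * ‖ξ‖ ^ 2 := by
    simp only [φ, hB, x0, norm_zero, PiLp.zero_apply]
    simpa using EuclideanSpace.sum_sum_const_mul_ite_mul_mul ((1 - r ^ 2) / r ^ 2) ξ
  have hα : α = ‖ξ‖ / r := by
    simp only [α, x0, norm_zero, inner_zero_left, ne_eq, OfNat.ofNat_ne_zero, not_false_eq_true,
      zero_pow, sub_zero, add_zero]
    rw [← mul_pow, Real.sqrt_sq (by positivity)]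
    field_simp
  have hF : F = ‖ξ‖ / r := by simp [F, hα, x0]
  rw [hψ, hφ, hα, hF]
  have hξ0 : ‖ξ‖ ≠ 0 := norm_ne_zero_iff.mpr hξ
  field_simp
  ring

/-- The flag curvature of the Funk-Finsler metric at the center of the Klein unit disc is
the negative constant `-(1 - (3/4)(1-r²)²)`, independent of the direction `ξ`. -/
theorem funk_flag_curvature_at_origin (r : ℝ) (hr0 : 0 < r) (hr1 : r < 1)
    (Γ : Fin 2 → Fin 2 → Fin 2 → EuclideanSpace ℝ (Fin 2) → ℝ)
    (hΓ : ∀ k i j x, Γ k i j x =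
      (x i * (if k = j then 1 else 0) + x j * (if k = i then 1 else 0)) /
        (r ^ 2 - ‖x‖ ^ 2))
    (B : Fin 2 → Fin 2 → EuclideanSpace ℝ (Fin 2) → ℝ)
    (hB : ∀ i j x, B i j x =
      ((1 - r ^ 2) / ((r ^ 2 - ‖x‖ ^ 2) * (1 - ‖x‖ ^ 2))) *
        ((if i = j then 1 else 0) + 2 * x i * x j / (1 - ‖x‖ ^ 2)))
    (B3 : Fin 2 → Fin 2 → Fin 2 → EuclideanSpace ℝ (Fin 2) → ℝ)
    (hB3 : ∀ i j k x, B3 i j k x =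
      fderiv ℝ (B i j) x (EuclideanSpace.single k 1) -
        (∑ m, B i m x * Γ m j k x) - ∑ m, B j m x * Γ m i k x)
    (ξ : EuclideanSpace ℝ (Fin 2)) (hξ : ξ ≠ 0) :
    let x0 : EuclideanSpace ℝ (Fin 2) := 0
    let α := Real.sqrt ((r ^ 2 - ‖x0‖ ^ 2) * ‖ξ‖ ^ 2 + ⟪x0, ξ⟫ ^ 2) / (r ^ 2 - ‖x0‖ ^ 2)
    let F := α + (1 - r ^ 2) * ⟪x0, ξ⟫ / ((r ^ 2 - ‖x0‖ ^ 2) * (1 - ‖x0‖ ^ 2))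
    let φ := ∑ i, ∑ j, B i j x0 * ξ i * ξ j
    let ψ := ∑ i, ∑ j, ∑ k, B3 i j k x0 * ξ i * ξ j * ξ k
    (3 * (φ / (2 * F)) ^ 2 - ψ / (2 * F) - α ^ 2) / F ^ 2 =
      -(1 - (3 / 4) * (1 - r ^ 2) ^ 2) :=
  funk_flag_curvature_at_origin_general r hr0 Γ hΓ B hB B3 hB3 ξ hξ
end
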